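/- For every even M_init and even O_init there exist initial configurations in which every initial color is shared by at least two robots (namely edge-view-symmetric configurations) that no deterministic algorithm can gather. -/
import Mathlib


set_option autoImplicit false

/-! ### Luminous myopic robots on an anonymous ring: basic model -/

/-- A configuration of `R` luminous robots with light colors in `C`
on an anonymous ring with `N` nodes (the nodes are `ZMod N`). -/
structure Config (N R : ℕ) (C : Type) where
  pos : Fin R → ZMod N
  light : Fin R → C

namespace Gathering

variable {N R : ℕ} {C : Type}

/-- The set of light colors present at node `u`. -/
def colorsAt (cfg : Config N R C) (u : ZMod N) : Set C :=
  {c | ∃ r, cfg.pos r = u ∧ cfg.light r = c}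

/-- Node `u` hosts at least one robot. -/
def occupiedNode (cfg : Config N R C) (u : ZMod N) : Prop :=
  ∃ r, cfg.pos r = u

/-- The view from node `u` with visibility range `φ`, in orientation `dir`:
the set of colors at signed offset `k`, for `|k| ≤ φ` (and `∅` beyond the range). -/
def nodeView (φ : ℕ) (cfg : Config N R C) (u : ZMod N) (dir : Bool) : ℤ → Set C :=
  fun k => if |k| ≤ (φ : ℤ) then
      colorsAt cfg (u + (if dir then (k : ZMod N) else ((-k : ℤ) : ZMod N)))
    else ∅

/-- Node `u` is a border node: it is occupied, all `φ` nodes on one side are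
empty, and some node within distance `φ` on the other side is occupied. -/
def isBorderNode (φ : ℕ) (cfg : Config N R C) (u : ZMod N) : Prop :=
  occupiedNode cfg u ∧
  ∃ dir : Bool,
    (∀ k : ℤ, 1 ≤ k → k ≤ (φ : ℤ) →
      ¬ occupiedNode cfg (u + (if dir then (k : ZMod N) else ((-k : ℤ) : ZMod N)))) ∧
    (∃ k : ℤ, 1 ≤ k ∧ k ≤ (φ : ℤ) ∧
      occupiedNode cfg (u + (if dir then ((-k : ℤ) : ZMod N) else (k : ZMod N))))

/-- Robot `r` is a border robot. -/
def isBorderRobot (φ : ℕ) (cfg : Config N R C) (r : Fin R) : Prop :=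
  isBorderNode φ cfg (cfg.pos r)

/-- The borders of a configuration: an occupied node together with a direction
in which the next `φ` nodes are all empty (their number is always even). -/
def borderPairs (φ : ℕ) (cfg : Config N R C) : Set (ZMod N × Bool) :=
  {p | occupiedNode cfg p.1 ∧
    ∀ k : ℤ, 1 ≤ k → k ≤ (φ : ℤ) →
      ¬ occupiedNode cfg (p.1 + (if p.2 then (k : ZMod N) else ((-k : ℤ) : ZMod N)))}

/-- Ring distance between two nodes. -/
def ringDist (u v : ZMod N) : ℕ := min (u - v).val (v - u).val

/-- Robots `r` and `r'` can observe each other. -/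
def canSee (φ : ℕ) (cfg : Config N R C) (r r' : Fin R) : Prop :=
  ringDist (cfg.pos r) (cfg.pos r') ≤ φ

/-- The visibility graph of the configuration is connected. -/
def VisConnected (φ : ℕ) (cfg : Config N R C) : Prop :=
  ∀ r r' : Fin R, Relation.ReflTransGen (canSee φ cfg) r r'

/-- The span of a configuration: the least `m` such that all occupied nodes fit
in a window of `m + 1` consecutive nodes.  In a configuration with exactly two
borders this is the distance `D` between the two border nodes. -/
noncomputable def spanDist (cfg : Config N R C) : ℕ :=
  sInf {m : ℕ | ∃ b : ZMod N, ∀ u, occupiedNode cfg u → ∃ i : ℕ, i ≤ m ∧ u = b + (i : ZMod N)}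

/-! ### Algorithms and asynchronous executions -/

/-- A deterministic algorithm for luminous robots in the full-light model:
given the robot's own color and its (oriented) view, output a new color and a
movement (`+1`, `0` or `-1`, relative to the orientation of the view). -/
structure Algo (C : Type) where
  out : C → (ℤ → Set C) → C × SignType

/-- The destination of a movement `m` from node `u`, for view orientation `dir`. -/
def moveTarget (u : ZMod N) (dir : Bool) (m : SignType) : ZMod N :=
  u + (if dir then ((m : ℤ) : ZMod N) else ((-(m : ℤ) : ℤ) : ZMod N))

/-- An execution of algorithm `A` under a fair asynchronous scheduler.
At each instant every robot either stays idle, performs a Look (together with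
the deterministic Compute, recording a plan: a new color and a destination
node; the orientation of the snapshot is chosen adversarially, as robots are
disoriented), becomes visible with its new color (end of the Compute phase,
keeping its pending plan), or performs its atomic Move, completing the cycle.
A robot `r` with `plan t r ≠ none` is a robot whose view may be outdated. -/
structure AsyncExec (N R : ℕ) (C : Type) (φ : ℕ) (A : Algo C) where
  cfg : ℕ → Config N R C
  plan : ℕ → Fin R → Option (C × ZMod N)
  init_plan : ∀ r, plan 0 r = none
  step : ∀ (t : ℕ) (r : Fin R),
      ((cfg (t+1)).pos r = (cfg t).pos r ∧ (cfg (t+1)).light r = (cfg t).light r ∧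
        plan (t+1) r = plan t r)
    ∨ (plan t r = none ∧ (cfg (t+1)).pos r = (cfg t).pos r ∧
        (cfg (t+1)).light r = (cfg t).light r ∧
        ∃ dir : Bool,
          plan (t+1) r =
            some ((A.out ((cfg t).light r) (nodeView φ (cfg t) ((cfg t).pos r) dir)).1,
              moveTarget ((cfg t).pos r) dir
                (A.out ((cfg t).light r) (nodeView φ (cfg t) ((cfg t).pos r) dir)).2))
    ∨ (∃ c u, plan t r = some (c, u) ∧ (cfg (t+1)).pos r = (cfg t).pos r ∧
        (cfg (t+1)).light r = c ∧ plan (t+1) r = some (c, u))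
    ∨ (∃ c u, plan t r = some (c, u) ∧ (cfg (t+1)).pos r = u ∧
        (cfg (t+1)).light r = c ∧ plan (t+1) r = none)
  fair : ∀ (r : Fin R) (t : ℕ), ∃ t', t ≤ t' ∧ plan t' r ≠ none ∧ plan (t'+1) r = none

/-- The execution achieves gathering: from some time on, all robots occupy a
single node and remain there forever. -/
def AchievesGathering {N R : ℕ} {C : Type} {φ : ℕ} {A : Algo C}
    (e : AsyncExec N R C φ A) : Prop :=
  ∃ (t : ℕ) (u : ZMod N), ∀ t', t ≤ t' → ∀ r, (e.cfg t').pos r = u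

/-! ### Initial configurations -/

/-- The robots occupy a segment `G'` of `Minit` nodes with base (border) node
`b`: both endpoints of the segment are occupied and are borders (the `φ` nodes
beyond each endpoint are empty), every occupied node lies in the segment,
consecutive occupied nodes are at distance at most `φ` (`H_init ≤ φ`, i.e. the
visibility graph is connected), and `Oinit` is the number of occupied nodes of
the segment. -/
def SegmentInitOn (φ : ℕ) (cfg : Config N R C) (b : ZMod N) (Minit Oinit : ℕ) : Prop :=
  2 ≤ Minit ∧
  occupiedNode cfg b ∧ occupiedNode cfg (b + ((Minit - 1 : ℕ) : ZMod N)) ∧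
  (∀ u, occupiedNode cfg u → ∃ i : ℕ, i < Minit ∧ u = b + (i : ZMod N)) ∧
  (∀ k : ℕ, 1 ≤ k → k ≤ φ →
    ¬ occupiedNode cfg (b - (k : ZMod N)) ∧
    ¬ occupiedNode cfg (b + ((Minit - 1 : ℕ) : ZMod N) + (k : ZMod N))) ∧
  (∀ i : ℕ, i + 1 < Minit → occupiedNode cfg (b + (i : ZMod N)) →
    ∃ j : ℕ, i < j ∧ j ≤ i + φ ∧ j < Minit ∧ occupiedNode cfg (b + (j : ZMod N))) ∧
  Oinit = {i : Fin Minit | occupiedNode cfg (b + ((i : ℕ) : ZMod N))}.ncard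

/-- Admissible initial configuration: all robots have the color `white`, and
the robots occupy a segment with two borders and connected visibility graph. -/
def AdmissibleInit (φ : ℕ) (cfg : Config N R C) (white : C) (Minit Oinit : ℕ) : Prop :=
  (∀ r, cfg.light r = white) ∧ ∃ b : ZMod N, SegmentInitOn φ cfg b Minit Oinit

/-! ### Edge-view symmetry and cautiousness -/

/-- Robots `r1` and `r2` are indistinguishable: they have the same color and
the same view (up to reversal, as robots are disoriented). -/
def viewsEq (φ : ℕ) (cfg : Config N R C) (r1 r2 : Fin R) : Prop :=
  cfg.light r1 = cfg.light r2 ∧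
  (nodeView φ cfg (cfg.pos r1) true = nodeView φ cfg (cfg.pos r2) true ∨
   nodeView φ cfg (cfg.pos r1) true = nodeView φ cfg (cfg.pos r2) false)

/-- Definition 20: a configuration is edge-view-symmetric if at least two
distinct nodes host robots and there is an edge `(u_i, u_{i+1})` such that for
every `k ≥ 0`, every robot at `u_{i-k}` has an indistinguishable counterpart at
`u_{i+k+1}`. -/
def EdgeViewSymmetric (φ : ℕ) (cfg : Config N R C) : Prop :=
  (∃ u v : ZMod N, u ≠ v ∧ occupiedNode cfg u ∧ occupiedNode cfg v) ∧
  ∃ i : ZMod N, ∀ (k : ℕ) (r1 : Fin R), cfg.pos r1 = i - (k : ZMod N) →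
    ∃ r2 : Fin R, cfg.pos r2 = i + (k : ZMod N) + 1 ∧ viewsEq φ cfg r1 r2

/-- Definition 23: an algorithm is cautious if robots only ever move toward
other occupied nodes (they never expand the span of the visibility graph). -/
def Cautious (φ : ℕ) (A : Algo C) : Prop :=
  ∀ (c : C) (v : ℤ → Set C),
    ((A.out c v).2 = 1 → ∃ k : ℤ, 1 ≤ k ∧ k ≤ (φ : ℤ) ∧ v k ≠ ∅) ∧
    ((A.out c v).2 = -1 → ∃ k : ℤ, 1 ≤ k ∧ k ≤ (φ : ℤ) ∧ v (-k) ≠ ∅)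

end Gathering

namespace Gathering

/-! ### Algorithm 1 (three colors) -/

/-- The three light colors of Algorithm 1. -/
inductive C3 : Type
  | White
  | Red
  | Blue
deriving DecidableEq

open Classical in
/-- The rules of Algorithm 1, for a view oriented so that the `φ` nodes at
negative offsets are empty (the observing robot is a border robot and the
positive direction points inward), in priority order
R1, R2a, R2b, R3a, R3b, R4a, R4b, R5. -/
noncomputable def algo1Rules (φ : ℕ) (c : C3) (v : ℤ → Set C3) : C3 × SignType :=
  -- R1 : ∅^φ [W!] (¬∅^φ)  ::  R
  if c = C3.White ∧ v 0 = {C3.White} then (C3.Red, 0)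
  -- R2a : ∅^φ [R!] (∅, B!) (¬(∅^(φ-1)))  ::  B, →
  else if c = C3.Red ∧ v 0 = {C3.Red} ∧ (v 1 = ∅ ∨ v 1 = {C3.Blue}) ∧
      ¬ (∀ k : ℤ, 2 ≤ k → k ≤ (φ : ℤ) → v k = ∅) then (C3.Blue, 1)
  -- R2b : ∅^φ [R!] (W) (?^(φ-1))  ::  B, →
  else if c = C3.Red ∧ v 0 = {C3.Red} ∧ C3.White ∈ v 1 ∧
      (∀ k : ℤ, 2 ≤ k → k ≤ (φ : ℤ) → v k ≠ ∅) then (C3.Blue, 1)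
  -- R3a : ∅^φ [B!] (∅, R!) (¬(∅^(φ-1)))  ::  R, →
  else if c = C3.Blue ∧ v 0 = {C3.Blue} ∧ (v 1 = ∅ ∨ v 1 = {C3.Red}) ∧
      ¬ (∀ k : ℤ, 2 ≤ k → k ≤ (φ : ℤ) → v k = ∅) then (C3.Red, 1)
  -- R3b : ∅^φ [B!] (W) (?^(φ-1))  ::  R, →
  else if c = C3.Blue ∧ v 0 = {C3.Blue} ∧ C3.White ∈ v 1 ∧
      (∀ k : ℤ, 2 ≤ k → k ≤ (φ : ℤ) → v k ≠ ∅) then (C3.Red, 1)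
  -- R4a : ∅^φ [R [W]] (¬∅^φ)  ::  R
  else if c = C3.White ∧ C3.Red ∈ v 0 then (C3.Red, 0)
  -- R4b : ∅^φ [B [W]] (¬∅^φ)  ::  B
  else if c = C3.White ∧ C3.Blue ∈ v 0 then (C3.Blue, 0)
  -- R5 : ∅^φ [R!] (B!) (∅^(φ-1))  ::  B, →
  else if c = C3.Red ∧ v 0 = {C3.Red} ∧ v 1 = {C3.Blue} ∧
      (∀ k : ℤ, 2 ≤ k → k ≤ (φ : ℤ) → v k = ∅) then (C3.Blue, 1)
  else (c, 0)

open Classical in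
/-- Algorithm 1: the rules are applied in the orientation in which the `φ`
nearest nodes on one side are all empty.  A robot seeing no other robot does
nothing (rule R0), and no rule is enabled for a non-border robot. -/
noncomputable def algo1 (φ : ℕ) : Algo C3 where
  out := fun c v =>
    if (∀ k : ℤ, 1 ≤ k → k ≤ (φ : ℤ) → v (-k) = ∅) ∧
       (∀ k : ℤ, 1 ≤ k → k ≤ (φ : ℤ) → v k = ∅) then (c, 0)
    else if ∀ k : ℤ, 1 ≤ k → k ≤ (φ : ℤ) → v (-k) = ∅ then algo1Rules φ c v
    else if ∀ k : ℤ, 1 ≤ k → k ≤ (φ : ℤ) → v k = ∅ then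
      ((algo1Rules φ c (fun k => v (-k))).1, -(algo1Rules φ c (fun k => v (-k))).2)
    else (c, 0)

/-! ### Algorithm 2 (four colors) -/

/-- The four light colors of Algorithm 2. -/
inductive C4 : Type
  | White
  | Red
  | Blue
  | Purple
deriving DecidableEq

open Classical in
/-- The rules of Algorithm 2, for a view oriented so that the `φ` nodes at
negative offsets are empty, in priority order
R1, R2a-1, R2a-2, R2b, R3a-1, R3a-2, R3b, R4a, R4b, R5a, R5b-1, R5b-2, R5b-3. -/
noncomputable def algo2Rules (φ : ℕ) (c : C4) (v : ℤ → Set C4) : C4 × SignType :=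
  -- R1 : ∅^φ [W!] (¬∅^φ)  ::  R
  if c = C4.White ∧ v 0 = {C4.White} then (C4.Red, 0)
  -- R2a-1 : ∅^φ [R!] (∅) (¬(∅^(φ-1)))  ::  →
  else if c = C4.Red ∧ v 0 = {C4.Red} ∧ v 1 = ∅ ∧
      ¬ (∀ k : ℤ, 2 ≤ k → k ≤ (φ : ℤ) → v k = ∅) then (C4.Red, 1)
  -- R2a-2 : ∅^φ [R!] (¬W, R) (¬(∅^(φ-1)))  ::  →
  else if c = C4.Red ∧ v 0 = {C4.Red} ∧ (C4.Red ∈ v 1 ∧ C4.White ∉ v 1) ∧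
      ¬ (∀ k : ℤ, 2 ≤ k → k ≤ (φ : ℤ) → v k = ∅) then (C4.Red, 1)
  -- R2b : ∅^φ [R!] (W) (?^(φ-1))  ::  B, →
  else if c = C4.Red ∧ v 0 = {C4.Red} ∧ C4.White ∈ v 1 ∧
      (∀ k : ℤ, 2 ≤ k → k ≤ (φ : ℤ) → v k ≠ ∅) then (C4.Blue, 1)
  -- R3a-1 : ∅^φ [B!] (∅) (¬(∅^(φ-1)))  ::  →
  else if c = C4.Blue ∧ v 0 = {C4.Blue} ∧ v 1 = ∅ ∧
      ¬ (∀ k : ℤ, 2 ≤ k → k ≤ (φ : ℤ) → v k = ∅) then (C4.Blue, 1)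
  -- R3a-2 : ∅^φ [B!] (¬W, B) (¬(∅^(φ-1)))  ::  →
  else if c = C4.Blue ∧ v 0 = {C4.Blue} ∧ (C4.Blue ∈ v 1 ∧ C4.White ∉ v 1) ∧
      ¬ (∀ k : ℤ, 2 ≤ k → k ≤ (φ : ℤ) → v k = ∅) then (C4.Blue, 1)
  -- R3b : ∅^φ [B!] (W) (?^(φ-1))  ::  R, →
  else if c = C4.Blue ∧ v 0 = {C4.Blue} ∧ C4.White ∈ v 1 ∧
      (∀ k : ℤ, 2 ≤ k → k ≤ (φ : ℤ) → v k ≠ ∅) then (C4.Red, 1)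
  -- R4a : ∅^φ [R [W]] (¬∅^φ)  ::  R
  else if c = C4.White ∧ C4.Red ∈ v 0 then (C4.Red, 0)
  -- R4b : ∅^φ [B [W]] (¬∅^φ)  ::  B
  else if c = C4.White ∧ C4.Blue ∈ v 0 then (C4.Blue, 0)
  -- R5a : ∅^φ [?] (P) (∅^(φ-1))  ::  →
  else if C4.Purple ∈ v 1 ∧ (∀ k : ℤ, 2 ≤ k → k ≤ (φ : ℤ) → v k = ∅) then (c, 1)
  -- R5b-1 : ∅^φ [B!] (R!) (∅^(φ-1))  ::  P
  else if c = C4.Blue ∧ v 0 = {C4.Blue} ∧ v 1 = {C4.Red} ∧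
      (∀ k : ℤ, 2 ≤ k → k ≤ (φ : ℤ) → v k = ∅) then (C4.Purple, 0)
  -- R5b-2 : ∅^φ [B!] (R, B) (∅^(φ-1))  ::  P
  else if c = C4.Blue ∧ v 0 = {C4.Blue} ∧ (C4.Red ∈ v 1 ∧ C4.Blue ∈ v 1) ∧
      (∀ k : ℤ, 2 ≤ k → k ≤ (φ : ℤ) → v k = ∅) then (C4.Purple, 0)
  -- R5b-3 : ∅^φ [R [B]] (R!) (∅^(φ-1))  ::  P
  else if c = C4.Blue ∧ C4.Red ∈ v 0 ∧ v 1 = {C4.Red} ∧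
      (∀ k : ℤ, 2 ≤ k → k ≤ (φ : ℤ) → v k = ∅) then (C4.Purple, 0)
  else (c, 0)

open Classical in
/-- Algorithm 2: the rules are applied in the orientation in which the `φ`
nearest nodes on one side are all empty.  A robot seeing no other robot does
nothing (rule R0), and no rule is enabled for a non-border robot. -/
noncomputable def algo2 (φ : ℕ) : Algo C4 where
  out := fun c v =>
    if (∀ k : ℤ, 1 ≤ k → k ≤ (φ : ℤ) → v (-k) = ∅) ∧
       (∀ k : ℤ, 1 ≤ k → k ≤ (φ : ℤ) → v k = ∅) then (c, 0)
    else if ∀ k : ℤ, 1 ≤ k → k ≤ (φ : ℤ) → v (-k) = ∅ then algo2Rules φ c v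
    else if ∀ k : ℤ, 1 ≤ k → k ≤ (φ : ℤ) → v k = ∅ then
      ((algo2Rules φ c (fun k => v (-k))).1, -(algo2Rules φ c (fun k => v (-k))).2)
    else (c, 0)

/-- `#O_W`: the number of nodes hosting a White robot that are not border
nodes. -/
noncomputable def numWhiteNonBorder {N R : ℕ} (φ : ℕ) (cfg : Config N R C4) : ℕ :=
  {u : ZMod N | C4.White ∈ colorsAt cfg u ∧ ¬ isBorderNode φ cfg u}.ncard

end Gathering


namespace Gathering


section ImpossibilityAux

variable {N R : ℕ} {C : Type}

/-- Mirror symmetry of a configuration under a pairing `σ` about `s0/2`. -/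
def SymUnder (σ : Fin R → Fin R) (s0 : ZMod N) (cfg : Config N R C) : Prop :=
  ∀ r, cfg.pos (σ r) = s0 - cfg.pos r ∧ cfg.light (σ r) = cfg.light r

lemma colorsAt_symm {σ : Fin R → Fin R} {s0 : ZMod N} {cfg : Config N R C}
    (h : SymUnder σ s0 cfg) (w : ZMod N) : colorsAt cfg (s0 - w) = colorsAt cfg w := by
  ext c
  constructor
  · rintro ⟨r, hr, hl⟩
    refine ⟨σ r, ?_, ?_⟩
    · rw [(h r).1, hr]; ring
    · rw [(h r).2, hl]
  · rintro ⟨r, hr, hl⟩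
    refine ⟨σ r, ?_, ?_⟩
    · rw [(h r).1, hr]
    · rw [(h r).2, hl]

lemma nodeView_symm {φ : ℕ} {σ : Fin R → Fin R} {s0 : ZMod N} {cfg : Config N R C}
    (h : SymUnder σ s0 cfg) (u : ZMod N) (d : Bool) :
    nodeView φ cfg (s0 - u) (!d) = nodeView φ cfg u d := by
  funext k
  unfold nodeView
  by_cases hk : |k| ≤ (φ : ℤ)
  · rw [if_pos hk, if_pos hk]
    cases d
    · simp only [Bool.not_false, Bool.false_eq_true, ↓reduceIte]
      have h1 : s0 - u + ((k : ℤ) : ZMod N) = s0 - (u + ((-k : ℤ) : ZMod N)) := by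
        push_cast; ring
      rw [h1, colorsAt_symm h]
    · simp only [Bool.not_true, Bool.false_eq_true, ↓reduceIte]
      have h1 : s0 - u + ((-k : ℤ) : ZMod N) = s0 - (u + ((k : ℤ) : ZMod N)) := by
        push_cast; ring
      rw [h1, colorsAt_symm h]
  · rw [if_neg hk, if_neg hk]

/-- The plan (target color, target node) computed by a robot in a Look phase. -/
noncomputable def planOf (φ : ℕ) (A : Algo C) (dir : Fin R → Bool)
    (cfg : Config N R C) (r : Fin R) : C × ZMod N :=
  ((A.out (cfg.light r) (nodeView φ cfg (cfg.pos r) (dir r))).1,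
    moveTarget (cfg.pos r) (dir r) (A.out (cfg.light r) (nodeView φ cfg (cfg.pos r) (dir r))).2)

/-- One synchronous round of the algorithm. -/
noncomputable def stepCfg (φ : ℕ) (A : Algo C) (dir : Fin R → Bool)
    (cfg : Config N R C) : Config N R C where
  pos r := (planOf φ A dir cfg r).2
  light r := (planOf φ A dir cfg r).1

lemma moveTarget_symm (s0 u : ZMod N) (d : Bool) (m : SignType) :
    moveTarget (s0 - u) (!d) m = s0 - moveTarget u d m := by
  cases d <;>
    · unfold moveTarget
      simp only [Bool.not_false, Bool.not_true, Bool.false_eq_true, ↓reduceIte]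
      push_cast
      ring

lemma stepCfg_symm {φ : ℕ} {A : Algo C} {dir : Fin R → Bool} {σ : Fin R → Fin R} {s0 : ZMod N}
    (hdir : ∀ r, dir (σ r) = !(dir r)) {cfg : Config N R C} (h : SymUnder σ s0 cfg) :
    SymUnder σ s0 (stepCfg φ A dir cfg) := by
  intro r
  have hout : A.out (cfg.light (σ r)) (nodeView φ cfg (cfg.pos (σ r)) (dir (σ r)))
      = A.out (cfg.light r) (nodeView φ cfg (cfg.pos r) (dir r)) := by
    rw [(h r).2, (h r).1, hdir, nodeView_symm h]
  constructor
  · show (planOf φ A dir cfg (σ r)).2 = s0 - (planOf φ A dir cfg r).2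
    unfold planOf
    rw [hout, (h r).1, hdir, moveTarget_symm]
  · show (planOf φ A dir cfg (σ r)).1 = (planOf φ A dir cfg r).1
    unfold planOf
    rw [hout]

/-- The fully synchronous execution with per-robot orientation `dir`. -/
noncomputable def mkExec (φ : ℕ) (A : Algo C) (dir : Fin R → Bool) (cfg0 : Config N R C) :
    AsyncExec N R C φ A where
  cfg t := (stepCfg φ A dir)^[t / 2] cfg0
  plan t r := if t % 2 = 1 then some (planOf φ A dir ((stepCfg φ A dir)^[t / 2] cfg0) r)
    else none
  init_plan r := by norm_num
  step t r := by
    rcases Nat.even_or_odd t with he | ho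
    · have h2 : t % 2 = 0 := Nat.even_iff.mp he
      have h3 : (t + 1) / 2 = t / 2 := by omega
      have h4 : (t + 1) % 2 = 1 := by omega
      right; left
      refine ⟨by simp [h2], by simp only [h3], by simp only [h3], dir r, ?_⟩
      simp only [h4, h3, if_pos rfl]
      rfl
    · have h2 : t % 2 = 1 := Nat.odd_iff.mp ho
      have h3 : (t + 1) / 2 = t / 2 + 1 := by omega
      have h4 : (t + 1) % 2 = 0 := by omega
      right; right; right
      refine ⟨(planOf φ A dir ((stepCfg φ A dir)^[t / 2] cfg0) r).1,
              (planOf φ A dir ((stepCfg φ A dir)^[t / 2] cfg0) r).2,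
              by simp only [h2, if_pos rfl]; rfl, ?_, ?_, by simp only [h4]; norm_num⟩
      · simp only [h3, Function.iterate_succ_apply']
        rfl
      · simp only [h3, Function.iterate_succ_apply']
        rfl
  fair r t := by
    refine ⟨2 * (t / 2) + 1, by omega, ?_, ?_⟩
    · have h : (2 * (t / 2) + 1) % 2 = 1 := by omega
      simp only [h, if_pos rfl]
      exact Option.some_ne_none _
    · have h : (2 * (t / 2) + 1 + 1) % 2 = 0 := by omega
      simp only [h]
      norm_num

lemma natCast_zmod_inj {n a b : ℕ} (hn : 0 < n) (ha : a < n) (hb : b < n)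
    (h : (a : ZMod n) = (b : ZMod n)) : a = b := by
  haveI : NeZero n := ⟨hn.ne'⟩
  rw [← ZMod.val_cast_of_lt ha, ← ZMod.val_cast_of_lt hb, h]

end ImpossibilityAux


section SegmentAux

/-- The mirror pairing of robot indices. -/
def mirrPerm (O : ℕ) (r : Fin O) : Fin O :=
  ⟨O - 1 - (r : ℕ), by have := r.isLt; omega⟩

/-- Node index of robot `r`: the first `h` robots occupy the first `h` nodes of
the segment, the last `h` robots the last `h` nodes. -/
def segIdx (M O h : ℕ) (r : Fin O) : ℕ :=
  if (r : ℕ) < h then (r : ℕ) else M - O + (r : ℕ)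

variable {M O h : ℕ}

lemma segIdx_lt (hOM : O ≤ M) (hh : O = h + h) (h1 : 1 ≤ h) (r : Fin O) :
    segIdx M O h r < M := by
  have := r.isLt
  unfold segIdx
  split <;> omega

lemma segIdx_mirror (hOM : O ≤ M) (hh : O = h + h) (r : Fin O) :
    segIdx M O h (mirrPerm O r) = M - 1 - segIdx M O h r := by
  have hr := r.isLt
  have hm : ((mirrPerm O r : Fin O) : ℕ) = O - 1 - (r : ℕ) := rfl
  unfold segIdx
  rw [hm]
  by_cases hc : (r : ℕ) < h
  · rw [if_neg (by omega), if_pos hc]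
    omega
  · rw [if_pos (by omega), if_neg hc]
    omega

lemma segIdx_inj (hOM : O ≤ M) (hh : O = h + h) {r r' : Fin O}
    (e : segIdx M O h r = segIdx M O h r') : r = r' := by
  have hr := r.isLt
  have hr' := r'.isLt
  unfold segIdx at e
  apply Fin.ext
  split_ifs at e <;> omega

/-- The concrete initial configuration. -/
def segCfg (N : ℕ) {C : Type} (c0 : C) (M O h : ℕ) : Config N O C where
  pos r := ((segIdx M O h r : ℕ) : ZMod N)
  light _ := c0

lemma segCfg_sym {N : ℕ} {C : Type} (c0 : C) (hOM : O ≤ M) (hh : O = h + h) (h1 : 1 ≤ h) :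
    SymUnder (mirrPerm O) (((M - 1 : ℕ) : ZMod N)) (segCfg N c0 M O h) := by
  intro r
  refine ⟨?_, rfl⟩
  show ((segIdx M O h (mirrPerm O r) : ℕ) : ZMod N)
      = ((M - 1 : ℕ) : ZMod N) - ((segIdx M O h r : ℕ) : ZMod N)
  rw [segIdx_mirror hOM hh, Nat.cast_sub (by have := segIdx_lt hOM hh h1 r; omega)]

lemma mkExec_cfg {N R : ℕ} {C : Type} (φ : ℕ) (A : Algo C) (dir : Fin R → Bool)
    (cfg0 : Config N R C) (t : ℕ) :
    (mkExec φ A dir cfg0).cfg t = (stepCfg φ A dir)^[t / 2] cfg0 := rfl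

end SegmentAux

/-- For every even `M_init` and even `O_init` there exist initial
configurations in which every initial color is shared by at least two robots
(namely edge-view-symmetric configurations) that no deterministic algorithm
can gather. -/
theorem even_even_shared_colors_impossible
    (C : Type) (c0 : C) (Minit Oinit : ℕ)
    (hM : Even Minit) (hO : Even Oinit) (hO2 : 2 ≤ Oinit) (hOM : Oinit ≤ Minit) :
    ∃ (N R phi : ℕ), 3 ≤ N ∧ 1 ≤ phi ∧
      ∃ cfg0 : Config N R C,
        (∃ b : ZMod N, SegmentInitOn phi cfg0 b Minit Oinit) ∧
        (∀ r : Fin R, ∃ r' : Fin R, r' ≠ r ∧ cfg0.light r' = cfg0.light r) ∧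
        EdgeViewSymmetric phi cfg0 ∧
        ∀ A : Algo C, ∃ e : AsyncExec N R C phi A,
          e.cfg 0 = cfg0 ∧ ¬ AchievesGathering e := by
  classical
  obtain ⟨h, hh⟩ := hO
  have h1 : 1 ≤ h := by omega
  obtain ⟨mh, hmh⟩ := hM
  have hM2 : 2 ≤ Minit := le_trans hO2 hOM
  refine ⟨4 * Minit, Oinit, Minit, by omega, by omega, ?_⟩
  haveI : NeZero (4 * Minit) := ⟨by omega⟩
  set cfg0 : Config (4 * Minit) Oinit C := segCfg (4 * Minit) c0 Minit Oinit h with hcfg0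
  set s0 : ZMod (4 * Minit) := ((Minit - 1 : ℕ) : ZMod (4 * Minit)) with hs0def
  have hsym : SymUnder (mirrPerm Oinit) s0 cfg0 := segCfg_sym c0 hOM hh h1
  have hlt : ∀ r : Fin Oinit, segIdx Minit Oinit h r < Minit := segIdx_lt hOM hh h1
  have hposr : ∀ r : Fin Oinit, cfg0.pos r = ((segIdx Minit Oinit h r : ℕ) : ZMod (4 * Minit)) :=
    fun _ => rfl
  -- the two extremal robots
  have hocc0 : occupiedNode cfg0 (0 : ZMod (4 * Minit)) := by
    refine ⟨⟨0, by omega⟩, ?_⟩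
    rw [hposr]
    have : segIdx Minit Oinit h ⟨0, by omega⟩ = 0 := if_pos h1
    rw [this, Nat.cast_zero]
  have hoccL : occupiedNode cfg0 (((Minit - 1 : ℕ) : ZMod (4 * Minit))) := by
    refine ⟨⟨Oinit - 1, by omega⟩, ?_⟩
    rw [hposr]
    have : segIdx Minit Oinit h ⟨Oinit - 1, by omega⟩ = Minit - 1 := by
      unfold segIdx
      rw [if_neg (by simp only []; omega)]
      simp only []
      omega
    rw [this]
  have hoccAll : ∀ u, occupiedNode cfg0 u →
      ∃ i : ℕ, i < Minit ∧ u = ((i : ℕ) : ZMod (4 * Minit)) := by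
    rintro u ⟨r, hr⟩
    exact ⟨segIdx Minit Oinit h r, hlt r, by rw [← hr, hposr]⟩
  refine ⟨cfg0, ⟨0, ?_⟩, ?_, ?_, ?_⟩
  · -- SegmentInitOn
    refine ⟨hM2, hocc0, by rw [zero_add]; exact hoccL, ?_, ?_, ?_, ?_⟩
    · intro u hu
      obtain ⟨i, hi, hu'⟩ := hoccAll u hu
      exact ⟨i, hi, by rw [zero_add]; exact hu'⟩
    · intro k hk1 hk2
      constructor
      · rintro ⟨r, hr⟩
        rw [hposr, zero_sub] at hr
        have he : ((segIdx Minit Oinit h r + k : ℕ) : ZMod (4 * Minit)) = 0 := by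
          push_cast
          rw [hr]
          ring
        have hd := (ZMod.natCast_eq_zero_iff _ _).mp he
        have := hlt r
        have := Nat.le_of_dvd (by omega) hd
        omega
      · rintro ⟨r, hr⟩
        rw [hposr, zero_add] at hr
        have he : ((segIdx Minit Oinit h r : ℕ) : ZMod (4 * Minit))
            = ((Minit - 1 + k : ℕ) : ZMod (4 * Minit)) := by
          rw [hr]
          push_cast
          ring
        have := natCast_zmod_inj (by omega) (by have := hlt r; omega) (by omega) he
        have := hlt r
        omega
    · intro i hi _
      refine ⟨Minit - 1, by omega, by omega, by omega, ?_⟩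
      rw [zero_add]
      exact hoccL
    · -- cardinality
      have hfinj : Function.Injective
          (fun r : Fin Oinit => (⟨segIdx Minit Oinit h r, hlt r⟩ : Fin Minit)) := by
        intro r r' e
        exact segIdx_inj hOM hh (congrArg Fin.val e)
      have hset : {i : Fin Minit | occupiedNode cfg0 ((0 : ZMod (4 * Minit)) + ((i : ℕ) : ZMod (4 * Minit)))}
          = Set.range (fun r : Fin Oinit => (⟨segIdx Minit Oinit h r, hlt r⟩ : Fin Minit)) := by
        ext i
        simp only [Set.mem_setOf_eq, Set.mem_range, zero_add]
        constructor
        · rintro ⟨r, hr⟩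
          rw [hposr] at hr
          refine ⟨r, Fin.ext ?_⟩
          exact natCast_zmod_inj (by omega) (by have := hlt r; omega)
            (by have := i.isLt; omega) hr
        · rintro ⟨r, rfl⟩
          exact ⟨r, by rw [hposr]⟩
      rw [hset, ← Nat.card_coe_set_eq, Nat.card_range_of_injective hfinj,
        Nat.card_eq_fintype_card, Fintype.card_fin]
  · -- shared colors
    intro r
    refine ⟨mirrPerm Oinit r, ?_, rfl⟩
    intro e
    have hv := congrArg Fin.val e
    have hm : ((mirrPerm Oinit r : Fin Oinit) : ℕ) = Oinit - 1 - (r : ℕ) := rfl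
    rw [hm] at hv
    have hrlt := r.isLt
    omega
  · -- EdgeViewSymmetric
    constructor
    · refine ⟨0, ((Minit - 1 : ℕ) : ZMod (4 * Minit)), ?_, hocc0, hoccL⟩
      intro e
      have e' : ((0 : ℕ) : ZMod (4 * Minit)) = ((Minit - 1 : ℕ) : ZMod (4 * Minit)) := by
        rw [Nat.cast_zero]
        exact e
      have := natCast_zmod_inj (by omega) (by omega) (by omega) e'
      omega
    · refine ⟨((mh - 1 : ℕ) : ZMod (4 * Minit)), ?_⟩
      have hs0eq : s0 = 2 * ((mh - 1 : ℕ) : ZMod (4 * Minit)) + 1 := by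
        rw [hs0def, show Minit - 1 = 2 * (mh - 1) + 1 from by omega]
        push_cast
        ring
      intro k r1 hr1
      refine ⟨mirrPerm Oinit r1, ?_, rfl, ?_⟩
      · rw [(hsym r1).1, hr1, hs0eq]
        ring
      · right
        rw [(hsym r1).1]
        have h5 := nodeView_symm (φ := Minit) hsym (cfg0.pos r1) true
        rw [Bool.not_true] at h5
        exact h5.symm
  · -- impossibility
    intro A
    set dirf : Fin Oinit → Bool := fun r => decide ((r : ℕ) < h) with hdirf
    have hdirσ : ∀ r, dirf (mirrPerm Oinit r) = !(dirf r) := by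
      intro r
      have hr := r.isLt
      have hm : ((mirrPerm Oinit r : Fin Oinit) : ℕ) = Oinit - 1 - (r : ℕ) := rfl
      by_cases hc : (r : ℕ) < h
      · have hcc : ¬ ((mirrPerm Oinit r : Fin Oinit) : ℕ) < h := by rw [hm]; omega
        simp [hdirf, hc, hcc]
      · have hcc : ((mirrPerm Oinit r : Fin Oinit) : ℕ) < h := by rw [hm]; omega
        simp [hdirf, hc, hcc]
    refine ⟨mkExec Minit A dirf cfg0, ?_, ?_⟩
    · rw [mkExec_cfg, Nat.zero_div, Function.iterate_zero_apply]
    · rintro ⟨t, u, hg⟩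
      have hsymt : ∀ n, SymUnder (mirrPerm Oinit) s0 ((stepCfg Minit A dirf)^[n] cfg0) := by
        intro n
        induction n with
        | zero => exact hsym
        | succ n ih =>
          rw [Function.iterate_succ_apply']
          exact stepCfg_symm hdirσ ih
      set r0 : Fin Oinit := ⟨0, by omega⟩ with hr0
      have h0 := hg t le_rfl r0
      have h1' := hg t le_rfl (mirrPerm Oinit r0)
      rw [mkExec_cfg] at h0 h1'
      have hs := (hsymt (t / 2) r0).1
      rw [h0, h1'] at hs
      -- hs : u = s0 - u
      have h2u : u + u = s0 := eq_sub_iff_add_eq.mp hs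
      have hdvd : (2 : ℕ) ∣ 4 * Minit := ⟨2 * Minit, by ring⟩
      have hmap := congrArg (ZMod.castHom hdvd (ZMod 2)) h2u
      rw [map_add, hs0def, map_natCast] at hmap
      have h21 : ((Minit - 1 : ℕ) : ZMod 2) = 1 := by
        rw [← ZMod.natCast_mod, show (Minit - 1) % 2 = 1 from by omega, Nat.cast_one]
      rw [h21] at hmap
      have : (ZMod.castHom hdvd (ZMod 2)) u + (ZMod.castHom hdvd (ZMod 2)) u = 0 := by
        have : ∀ x : ZMod 2, x + x = 0 := by decide
        exact this _
      rw [this] at hmap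
      exact absurd hmap (by decide)

end Gathering
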